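/- For every integer n ≥ 2 and all λ, z ∈ ℂ one has 4λ(λ+1)(1−z²)·C_{n−2}^{λ+2}(z) − 2λ(2λ+1)·C_{n−2}^{λ+1}(z) + n(n−1)·C_n^λ(z) = 0. -/

import Mathlib

/-- The Gegenbauer polynomial `C_k^λ(z)`, defined by its explicit finite-sum formula. -/
noncomputable def gegenbauer (k : ℕ) (lam z : ℂ) : ℂ :=
  ∑ m ∈ Finset.range (k / 2 + 1),
    ((-1 : ℂ) ^ m * (ascPochhammer ℂ (k - m)).eval lam /
        ((Nat.factorial m : ℂ) * (Nat.factorial (k - 2 * m) : ℂ))) * (2 * z) ^ (k - 2 * m)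

/-- A single term of the Gegenbauer sum. -/
noncomputable def gterm (k : ℕ) (lam z : ℂ) (m : ℕ) : ℂ :=
  ((-1 : ℂ) ^ m * (ascPochhammer ℂ (k - m)).eval lam /
      ((Nat.factorial m : ℂ) * (Nat.factorial (k - 2 * m) : ℂ))) * (2 * z) ^ (k - 2 * m)

lemma gegenbauer_eq (k : ℕ) (lam z : ℂ) :
    gegenbauer k lam z = ∑ m ∈ Finset.range (k / 2 + 1), gterm k lam z m := rfl

lemma asc_sl (k : ℕ) (x : ℂ) :
    (ascPochhammer ℂ (k+1)).eval x = x * (ascPochhammer ℂ k).eval (x+1) := by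
  rw [ascPochhammer_succ_left]
  simp [Polynomial.eval_comp]

lemma rearrange (J : ℕ) (t2 t1 t0 : ℕ → ℂ) (c4 c2 cz cn : ℂ) :
    c4 * (1 - cz) * (∑ m ∈ Finset.range (J+1), t2 m)
      - c2 * (∑ m ∈ Finset.range (J+1), t1 m)
      + cn * (∑ m ∈ Finset.range (J+2), t0 m)
    = (cn * t0 0 - c4 * cz * t2 0)
      + (∑ m ∈ Finset.range J,
          (c4 * t2 m - c4 * cz * t2 (m+1) - c2 * t1 m + cn * t0 (m+1)))
      + (c4 * t2 J - c2 * t1 J + cn * t0 (J+1)) := by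
  induction J with
  | zero => simp [Finset.sum_range_succ]; ring
  | succ J ih =>
    simp only [Finset.sum_range_succ] at *
    linear_combination ih

lemma L0' (n : ℕ) (hn : 2 ≤ n) (lam z : ℂ) :
    (n:ℂ)*((n:ℂ)-1) * gterm n lam z 0 - 4*lam*(lam+1) * z^2 * gterm (n-2) (lam+2) z 0 = 0 := by
  obtain ⟨q, rfl⟩ : ∃ q, n = q + 2 := ⟨n - 2, by omega⟩
  simp only [gterm, Nat.sub_zero, Nat.mul_zero, Nat.add_sub_cancel, pow_zero, one_mul,
    Nat.factorial_zero, Nat.cast_one]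
  have e2 : (lam + 2 : ℂ) = lam + 1 + 1 := by ring
  have r1 : (ascPochhammer ℂ (q+2)).eval lam
      = lam * ((lam+1) * (ascPochhammer ℂ q).eval (lam+1+1)) := by
    rw [asc_sl, asc_sl]
  rw [e2, r1]
  have hf2 : (((q+2).factorial : ℕ) : ℂ) = ((q:ℂ)+2) * (((q:ℂ)+1) * (q.factorial : ℂ)) := by
    rw [show q+2 = q+1+1 from rfl, Nat.factorial_succ, Nat.factorial_succ]
    push_cast; ring
  have h1 : ((q.factorial : ℕ) : ℂ) ≠ 0 := Nat.cast_ne_zero.2 q.factorial_ne_zero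
  have h2 : (((q+2).factorial : ℕ) : ℂ) ≠ 0 := Nat.cast_ne_zero.2 (q+2).factorial_ne_zero
  field_simp
  rw [hf2]
  push_cast; ring

lemma Lmid' (n m : ℕ) (h : 2*m + 4 ≤ n) (lam z : ℂ) :
    4*lam*(lam+1) * gterm (n-2) (lam+2) z m - 4*lam*(lam+1)*z^2 * gterm (n-2) (lam+2) z (m+1)
      - 2*lam*(2*lam+1) * gterm (n-2) (lam+1) z m
      + (n:ℂ)*((n:ℂ)-1) * gterm n lam z (m+1) = 0 := by
  obtain ⟨q, rfl⟩ : ∃ q, n = 2*m+4+q := ⟨n-(2*m+4), by omega⟩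
  simp only [gterm,
    show 2*m+4+q - 2 - m = m+q+2 from by omega,
    show 2*m+4+q - 2 - 2*m = q+2 from by omega,
    show 2*m+4+q - 2 - (m+1) = m+q+1 from by omega,
    show 2*m+4+q - 2 - 2*(m+1) = q from by omega,
    show 2*m+4+q - (m+1) = m+q+3 from by omega,
    show 2*m+4+q - 2*(m+1) = q+2 from by omega]
  have e2 : (lam + 2 : ℂ) = lam + 1 + 1 := by ring
  have r1 : (ascPochhammer ℂ (m+q+3)).eval lam
      = lam * ((lam+1) * (ascPochhammer ℂ (m+q+1)).eval (lam+1+1)) := by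
    rw [show m+q+3 = m+q+1+1+1 from rfl, asc_sl, asc_sl]
  have r2 : (ascPochhammer ℂ (m+q+2)).eval (lam+1+1)
      = (ascPochhammer ℂ (m+q+1)).eval (lam+1+1) * (lam+1+1+(m+q+1 : ℕ)) := by
    rw [show m+q+2 = m+q+1+1 from rfl, ascPochhammer_succ_eval]
  have r3 : (ascPochhammer ℂ (m+q+2)).eval (lam+1)
      = (lam+1) * (ascPochhammer ℂ (m+q+1)).eval (lam+1+1) := by
    rw [show m+q+2 = m+q+1+1 from rfl, asc_sl]
  rw [e2, r1, r2, r3]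
  have hf1 : (((m+1).factorial : ℕ) : ℂ) = ((m:ℂ)+1) * (m.factorial : ℂ) := by
    rw [Nat.factorial_succ]; push_cast; ring
  have hf2 : (((q+2).factorial : ℕ) : ℂ) = ((q:ℂ)+2) * (((q:ℂ)+1) * (q.factorial : ℂ)) := by
    rw [show q+2 = q+1+1 from rfl, Nat.factorial_succ, Nat.factorial_succ]
    push_cast; ring
  have h1 : ((q.factorial : ℕ) : ℂ) ≠ 0 := Nat.cast_ne_zero.2 q.factorial_ne_zero
  have h2 : (((q+2).factorial : ℕ) : ℂ) ≠ 0 := Nat.cast_ne_zero.2 (q+2).factorial_ne_zero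
  have h3 : ((m.factorial : ℕ) : ℂ) ≠ 0 := Nat.cast_ne_zero.2 m.factorial_ne_zero
  have h4 : (((m+1).factorial : ℕ) : ℂ) ≠ 0 := Nat.cast_ne_zero.2 (m+1).factorial_ne_zero
  field_simp
  rw [hf1, hf2]
  push_cast; ring

lemma Llast' (n J : ℕ) (h : n/2 = J+1) (lam z : ℂ) :
    4*lam*(lam+1) * gterm (n-2) (lam+2) z J - 2*lam*(2*lam+1) * gterm (n-2) (lam+1) z J
      + (n:ℂ)*((n:ℂ)-1) * gterm n lam z (J+1) = 0 := by
  rcases (by omega : n = 2*J+2 ∨ n = 2*J+3) with rfl | rfl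
  · -- even case n = 2J+2
    simp only [gterm,
      show 2*J+2 - 2 - J = J from by omega,
      show 2*J+2 - 2 - 2*J = 0 from by omega,
      show 2*J+2 - (J+1) = J+1 from by omega,
      show 2*J+2 - 2*(J+1) = 0 from by omega,
      Nat.factorial_zero, Nat.cast_one, pow_zero, mul_one]
    have e2 : (lam + 2 : ℂ) = lam + 1 + 1 := by ring
    have r1 : (ascPochhammer ℂ (J+1)).eval lam
        = lam * ((ascPochhammer ℂ J).eval (lam+1)) := asc_sl J lam
    have key : (lam+1) * (ascPochhammer ℂ J).eval (lam+1+1)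
        = (ascPochhammer ℂ J).eval (lam+1) * (lam+1+(J:ℕ)) := by
      rw [← asc_sl, ascPochhammer_succ_eval]
    rw [e2, r1]
    have hf1 : (((J+1).factorial : ℕ) : ℂ) = ((J:ℂ)+1) * (J.factorial : ℂ) := by
      rw [Nat.factorial_succ]; push_cast; ring
    have h1 : ((J.factorial : ℕ) : ℂ) ≠ 0 := Nat.cast_ne_zero.2 J.factorial_ne_zero
    have h2 : (((J+1).factorial : ℕ) : ℂ) ≠ 0 := Nat.cast_ne_zero.2 (J+1).factorial_ne_zero
    field_simp
    rw [hf1]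
    push_cast
    linear_combination (4*lam*((J:ℂ)+1)*(J.factorial : ℂ) * (-1:ℂ)^J) * key
  · -- odd case n = 2J+3
    simp only [gterm,
      show 2*J+3 - 2 - J = J+1 from by omega,
      show 2*J+3 - 2 - 2*J = 1 from by omega,
      show 2*J+3 - (J+1) = J+2 from by omega,
      show 2*J+3 - 2*(J+1) = 1 from by omega,
      Nat.factorial_one, Nat.cast_one, pow_one]
    have e2 : (lam + 2 : ℂ) = lam + 1 + 1 := by ring
    have r1 : (ascPochhammer ℂ (J+2)).eval lam
        = lam * ((lam+1) * (ascPochhammer ℂ J).eval (lam+1+1)) := by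
      rw [show J+2 = J+1+1 from rfl, asc_sl, asc_sl]
    have r2 : (ascPochhammer ℂ (J+1)).eval (lam+1+1)
        = (ascPochhammer ℂ J).eval (lam+1+1) * (lam+1+1+(J:ℕ)) := ascPochhammer_succ_eval J _
    have r3 : (ascPochhammer ℂ (J+1)).eval (lam+1)
        = (lam+1) * (ascPochhammer ℂ J).eval (lam+1+1) := asc_sl J _
    rw [e2, r1, r2, r3]
    have hf1 : (((J+1).factorial : ℕ) : ℂ) = ((J:ℂ)+1) * (J.factorial : ℂ) := by
      rw [Nat.factorial_succ]; push_cast; ring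
    have h1 : ((J.factorial : ℕ) : ℂ) ≠ 0 := Nat.cast_ne_zero.2 J.factorial_ne_zero
    have h2 : (((J+1).factorial : ℕ) : ℂ) ≠ 0 := Nat.cast_ne_zero.2 (J+1).factorial_ne_zero
    field_simp
    rw [hf1]
    push_cast; ring

theorem statement3 (n : ℕ) (hn : 2 ≤ n) (lam z : ℂ) :
    4 * lam * (lam + 1) * (1 - z ^ 2) * gegenbauer (n - 2) (lam + 2) z
      - 2 * lam * (2 * lam + 1) * gegenbauer (n - 2) (lam + 1) z
      + (n : ℂ) * ((n : ℂ) - 1) * gegenbauer n lam z = 0 := by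
  obtain ⟨J, hJ⟩ : ∃ J, n / 2 = J + 1 := ⟨n/2 - 1, by omega⟩
  have hg2 : ∀ mu : ℂ, gegenbauer (n-2) mu z = ∑ m ∈ Finset.range (J+1), gterm (n-2) mu z m := by
    intro mu; rw [gegenbauer_eq, show (n-2)/2 + 1 = J+1 from by omega]
  have hg : gegenbauer n lam z = ∑ m ∈ Finset.range (J+2), gterm n lam z m := by
    rw [gegenbauer_eq, show n/2 + 1 = J+2 from by omega]
  rw [hg, hg2, hg2]
  rw [rearrange J (gterm (n-2) (lam+2) z) (gterm (n-2) (lam+1) z) (gterm n lam z)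
    (4*lam*(lam+1)) (2*lam*(2*lam+1)) (z^2) ((n:ℂ)*((n:ℂ)-1))]
  rw [L0' n hn lam z, Llast' n J hJ lam z]
  rw [Finset.sum_eq_zero (fun m hm => Lmid' n m (by
    have := Finset.mem_range.1 hm; omega) lam z)]
  ring
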